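/- For every infinite sequence i : ℕ → Fin m and every point x₀ ∈ X, the sequence of iterated images n ↦ (w_{i(0)} ∘ w_{i(1)} ∘ ⋯ ∘ w_{i(n−1)})(x₀) converges in X, and the limit is independent of the choice of x₀: for any x₀, y₀ ∈ X the two corresponding sequences have the same limit. -/

import Mathlib

open Filter Set Metric Topology

/-!
The composition `w_{i 0} ∘ ⋯ ∘ w_{i (n-1)}` is `K ^ n`-Lipschitz. Since it differs from the
`(n+1)`-fold composition only by the last map applied, the orbit of a point `x` moves by at most
`K ^ n * max_j dist x (w j x)` at step `n`, so it is Cauchy, hence convergent; and the orbits of two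
points approach each other at rate `K ^ n`, so they share the limit.
-/

/-- The `n`-fold composition `w_{i 0} ∘ w_{i 1} ∘ ⋯ ∘ w_{i (n-1)}` of maps of an iterated
function system along the first `n` letters of the sequence `i`. -/
def iterComp {X : Type*} {m : ℕ} (w : Fin m → X → X) (i : ℕ → Fin m) : ℕ → X → X
  | 0 => id
  | n + 1 => w (i 0) ∘ iterComp w (fun k => i (k + 1)) n

namespace iterComp

variable {X : Type*} {m : ℕ} (w : Fin m → X → X)

theorem succ' (i : ℕ → Fin m) (n : ℕ) : iterComp w i (n + 1) = iterComp w i n ∘ w (i n) := by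
  induction n generalizing i with
  | zero => rfl
  | succ n ih =>
    change w (i 0) ∘ iterComp w (fun k => i (k + 1)) (n + 1) = w (i 0) ∘ _ ∘ _
    rw [ih]

variable [PseudoMetricSpace X] {K : NNReal} {w}

theorem lipschitzWith (hw : ∀ j, LipschitzWith K (w j)) (i : ℕ → Fin m) (n : ℕ) :
    LipschitzWith (K ^ n) (iterComp w i n) := by
  induction n generalizing i with
  | zero => exact LipschitzWith.id
  | succ n ih => rw [pow_succ']; exact (hw (i 0)).comp (ih _)

theorem cauchySeq (hw : ∀ j, LipschitzWith K (w j)) (hK : K < 1) (i : ℕ → Fin m) (x : X) :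
    CauchySeq fun n => iterComp w i n x := by
  obtain ⟨C, hC⟩ := Finite.exists_le fun j => dist x (w j x)
  refine cauchySeq_of_le_geometric (K : ℝ) C hK fun n => ?_
  calc dist (iterComp w i n x) (iterComp w i (n + 1) x)
      = dist (iterComp w i n x) (iterComp w i n (w (i n) x)) := by rw [succ']; rfl
    _ ≤ K ^ n * dist x (w (i n) x) := by exact_mod_cast (lipschitzWith hw i n).dist_le_mul _ _
    _ ≤ C * K ^ n := by rw [mul_comm]; gcongr; exact hC _

theorem tendsto_dist_zero (hw : ∀ j, LipschitzWith K (w j)) (hK : K < 1) (i : ℕ → Fin m)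
    (x y : X) : Tendsto (fun n => dist (iterComp w i n x) (iterComp w i n y)) atTop (𝓝 0) := by
  have hpow : Tendsto (fun n => (K : ℝ) ^ n * dist x y) atTop (𝓝 0) := by
    simpa using (tendsto_pow_atTop_nhds_zero_of_lt_one K.2 hK).mul_const (dist x y)
  refine squeeze_zero (fun _ => dist_nonneg) (fun n => ?_) hpow
  exact_mod_cast (lipschitzWith hw i n).dist_le_mul x y

end iterComp

theorem ifs_iterated_images_converge_general
    {X : Type*} [MetricSpace X] [Nonempty X] [CompleteSpace X]
    {m : ℕ} (K : ℝ) (hK0 : 0 ≤ K) (hK1 : K < 1)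
    (w : Fin m → X → X)
    (hw : ∀ j : Fin m, ∀ x y : X, dist (w j x) (w j y) ≤ K * dist x y)
    (i : ℕ → Fin m) :
    ∃ L : X, ∀ x₀ : X, Tendsto (fun n : ℕ => iterComp w i n x₀) atTop (𝓝 L) := by
  have hlip : ∀ j, LipschitzWith ⟨K, hK0⟩ (w j) := fun j => LipschitzWith.of_dist_le_mul (hw j)
  obtain ⟨x₁⟩ := ‹Nonempty X›
  obtain ⟨L, hL⟩ := cauchySeq_tendsto_of_complete (iterComp.cauchySeq hlip hK1 i x₁)
  exact ⟨L, fun x₀ => hL.congr_dist (iterComp.tendsto_dist_zero hlip hK1 i x₁ x₀)⟩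

/-- For every sequence `i` and every `x₀`, the iterated images
`(w_{i 0} ∘ ⋯ ∘ w_{i (n-1)}) x₀` converge, with limit independent of `x₀`. -/
theorem ifs_iterated_images_converge
    {X : Type*} [MetricSpace X] [Nonempty X] [CompleteSpace X]
    {m : ℕ} (hm : 1 ≤ m) (K : ℝ) (hK0 : 0 ≤ K) (hK1 : K < 1)
    (w : Fin m → X → X)
    (hw : ∀ j : Fin m, ∀ x y : X, dist (w j x) (w j y) ≤ K * dist x y)
    (i : ℕ → Fin m) :
    ∃ L : X, ∀ x₀ : X, Tendsto (fun n : ℕ => iterComp w i n x₀) atTop (𝓝 L) :=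
  ifs_iterated_images_converge_general K hK0 hK1 w hw i
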